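/- DL-Lite_FR is not closed under ABox contraction for glob^atoms_⊆ and for all four local semantics loc^y_z (y ∈ {atoms, symbols}, z ∈ {⊆, ♯}), already when the information to be contracted is a single ABox assertion. In particular, taking the same initial KBs as in the corresponding ABox-expansion cases — (a) the DL-Lite_core KB with TBox T = {EmpWife ⊑ Wife, Wife ⊑ ∃HasHusband, ∃HasHusband ⊑ Wife, Priest ⊑ ¬∃HasHusband⁻} and ABox {EmpWife(mary), HasHusband(mary, john), Priest(adam), Priest(bob)} for loc^atoms_⊆ and loc^atoms_♯, (b) the variant with P0 ⊑ Priest, P1 ⊑ Priest, P2 ⊑ Priest and ABox {HasHusband(mary, john), Priest(adam), P1(adam), Priest(bob), P2(bob)} for loc^symbols_⊆ and loc^symbols_♯, and (c) the DL-Lite_F variant with funct(HasHusband) added for glob^atoms_⊆ — and contracting the assertion N = {HasHusband(mary, john)}, the resulting set of interpretations K ⊖ N is not Mod(K') for any DL-Lite_FR KB K'. -/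

import Mathlib

namespace DLLite

/-- The countably infinite domain of constants. -/
abbrev Δ : Type := ℕ
/-- Countably infinite set of concept names. -/
abbrev ConceptName : Type := ℕ
/-- Countably infinite set of role names. -/
abbrev RoleName : Type := ℕ

/-- An interpretation assigns a set of domain elements to each concept name
and a binary relation to each role name; constants are interpreted as themselves. -/
structure Interp where
  concept : ConceptName → Set Δ
  role : RoleName → Set (Δ × Δ)

/-- Basic roles: `P` or `P⁻`. -/
inductive BasicRole where
  | pos (P : RoleName)
  | inv (P : RoleName)
deriving DecidableEq

def BasicRole.interp (R : BasicRole) (I : Interp) : Set (Δ × Δ) :=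
  match R with
  | .pos P => I.role P
  | .inv P => {p | (p.2, p.1) ∈ I.role P}

/-- Basic concepts: `A` or `∃R`. -/
inductive BasicConcept where
  | atom (A : ConceptName)
  | ex (R : BasicRole)
deriving DecidableEq

def BasicConcept.interp (B : BasicConcept) (I : Interp) : Set Δ :=
  match B with
  | .atom A => I.concept A
  | .ex R => {o | ∃ o', (o, o') ∈ R.interp I}

/-- DL-Lite_FR assertions: (negative) concept/role inclusions, functionality
assertions, and membership assertions. -/
inductive Assertion where
  | conceptIncl (B1 B2 : BasicConcept)
  | conceptDisj (B1 B2 : BasicConcept)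
  | roleIncl (R1 R2 : BasicRole)
  | roleDisj (R1 R2 : BasicRole)
  | funct (R : BasicRole)
  | memberC (A : ConceptName) (a : Δ)
  | memberR (P : RoleName) (a b : Δ)
deriving DecidableEq

/-- Satisfaction of an assertion by an interpretation. -/
def Interp.sat (I : Interp) : Assertion → Prop
  | .conceptIncl B1 B2 => B1.interp I ⊆ B2.interp I
  | .conceptDisj B1 B2 => B1.interp I ∩ B2.interp I = ∅
  | .roleIncl R1 R2 => R1.interp I ⊆ R2.interp I
  | .roleDisj R1 R2 => R1.interp I ∩ R2.interp I = ∅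
  | .funct R => ∀ o o1 o2, (o, o1) ∈ R.interp I → (o, o2) ∈ R.interp I → o1 = o2
  | .memberC A a => a ∈ I.concept A
  | .memberR P a b => (a, b) ∈ I.role P

/-- TBox assertions: inclusion or functionality assertions. -/
def Assertion.isTBox : Assertion → Prop
  | .memberC _ _ => False
  | .memberR _ _ _ => False
  | _ => True

/-- Membership (ABox) assertions. -/
def Assertion.isMembership : Assertion → Prop
  | .memberC _ _ => True
  | .memberR _ _ _ => True
  | _ => False

/-- The constants occurring in an assertion. -/
def Assertion.constants : Assertion → Set Δ
  | .memberC _ a => {a}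
  | .memberR _ a b => {a, b}
  | _ => ∅

/-- A knowledge base: a finite set of assertions (TBox ∪ ABox). -/
abbrev KB := Finset Assertion

/-- The set of models of a KB. -/
def Mod (K : KB) : Set Interp := {I | ∀ a ∈ K, I.sat a}

/-- Interpretations falsifying at least one assertion of `K`. -/
def NonMod (K : KB) : Set Interp := {I | ∃ a ∈ K, ¬ I.sat a}

/-- The constants occurring in a KB. -/
def KB.constants (K : KB) : Set Δ := ⋃ a ∈ K, Assertion.constants a

/-- Atoms: ground facts `A(o)` or `P(o,o')`. -/
inductive Atom where
  | c (A : ConceptName) (o : Δ)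
  | r (P : RoleName) (o o' : Δ)
deriving DecidableEq

/-- The atom set of an interpretation. -/
def Interp.atoms (I : Interp) : Set Atom :=
  fun a => match a with
  | .c A o => o ∈ I.concept A
  | .r P o o' => (o, o') ∈ I.role P

/-- Concept or role names (symbols). -/
inductive SName where
  | c (A : ConceptName)
  | r (P : RoleName)
deriving DecidableEq

/-- Atom-based set distance: symmetric difference of atom sets. -/
def distASub (I J : Interp) : Set Atom := symmDiff I.atoms J.atoms
/-- Atom-based cardinality distance. -/
noncomputable def distACard (I J : Interp) : ℕ∞ := (symmDiff I.atoms J.atoms).encard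
/-- Symbol-based set distance: names interpreted differently. -/
def distSSub (I J : Interp) : Set SName :=
  fun n => match n with
  | .c A => I.concept A ≠ J.concept A
  | .r P => I.role P ≠ J.role P
/-- Symbol-based cardinality distance. -/
noncomputable def distSCard (I J : Interp) : ℕ∞ := (distSSub I J).encard

/-- Global expansion w.r.t. a distance. -/
def expGlobD {D : Type} [PartialOrder D] (dist : Interp → Interp → D)
    (M N : Set Interp) : Set Interp :=
  {J | J ∈ N ∧ ∃ I ∈ M, ∀ I' ∈ M, ∀ J' ∈ N, ¬ dist I' J' < dist I J}

/-- Local expansion w.r.t. a distance. -/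
def expLocD {D : Type} [PartialOrder D] (dist : Interp → Interp → D)
    (M N : Set Interp) : Set Interp :=
  {J | J ∈ N ∧ ∃ I ∈ M, ∀ J' ∈ N, ¬ dist I J' < dist I J}

inductive LocKind | glob | loc
inductive MeasKind | atoms | symbols
inductive OrdKind | subset | card

/-- The expansion operator on sets of interpretations for each of the
eight model-based semantics `X^y_z`. -/
def expansionSet : LocKind → MeasKind → OrdKind → Set Interp → Set Interp → Set Interp
  | .glob, .atoms, .subset => expGlobD distASub
  | .glob, .atoms, .card => expGlobD distACard
  | .glob, .symbols, .subset => expGlobD distSSub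
  | .glob, .symbols, .card => expGlobD distSCard
  | .loc, .atoms, .subset => expLocD distASub
  | .loc, .atoms, .card => expLocD distACard
  | .loc, .symbols, .subset => expLocD distSSub
  | .loc, .symbols, .card => expLocD distSCard

/-- KB expansion `K ⊕ N` under semantics `X^y_z`. -/
def expandKB (X : LocKind) (y : MeasKind) (z : OrdKind) (K N : KB) : Set Interp :=
  expansionSet X y z (Mod K) (Mod N)

/-- KB contraction `K ⊖ N` under semantics `X^y_z`. -/
def contractKB (X : LocKind) (y : MeasKind) (z : OrdKind) (K N : KB) : Set Interp :=
  Mod K ∪ expansionSet X y z (Mod K) (NonMod N)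

/-- Union of two interpretations. -/
def Interp.union (I1 I2 : Interp) : Interp :=
  ⟨fun A => I1.concept A ∪ I2.concept A, fun P => I1.role P ∪ I2.role P⟩

/-- The support set of an interpretation. -/
def Interp.support (I : Interp) : Set Δ :=
  (⋃ A, I.concept A) ∪ (⋃ P, {o | ∃ o', (o, o') ∈ I.role P ∨ (o', o) ∈ I.role P})

/-- The image `I^f` of an interpretation under an (injective) map `f`. -/
def Interp.image (I : Interp) (f : Δ → Δ) : Interp :=
  ⟨fun A => f '' I.concept A, fun P => (fun p => (f p.1, f p.2)) '' I.role P⟩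

/-- `h` is a homomorphism from `I` to `J`. -/
def IsHom (h : Δ → Δ) (I J : Interp) : Prop :=
  (∀ A, h '' I.concept A ⊆ J.concept A) ∧
  (∀ P o o', (o, o') ∈ I.role P → (h o, h o') ∈ J.role P)

end DLLite

namespace DLLite

def EmpWife : ConceptName := 0
def Wife : ConceptName := 1
def Priest : ConceptName := 2
def P0 : ConceptName := 3
def P1 : ConceptName := 4
def P2 : ConceptName := 5
def HasHusband : RoleName := 0
def mary : Δ := 0
def john : Δ := 1
def adam : Δ := 2
def bob : Δ := 3

/-- T = {EmpWife ⊑ Wife, Wife ⊑ ∃HasHusband, ∃HasHusband ⊑ Wife,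
Priest ⊑ ¬∃HasHusband⁻}. -/
def Ta : Finset Assertion :=
  { .conceptIncl (.atom EmpWife) (.atom Wife),
    .conceptIncl (.atom Wife) (.ex (.pos HasHusband)),
    .conceptIncl (.ex (.pos HasHusband)) (.atom Wife),
    .conceptDisj (.atom Priest) (.ex (.inv HasHusband)) }

/-- A = {EmpWife(mary), HasHusband(mary, john), Priest(adam), Priest(bob)}. -/
def Aa : Finset Assertion :=
  { .memberC EmpWife mary,
    .memberR HasHusband mary john,
    .memberC Priest adam,
    .memberC Priest bob }

/-- The DL-Lite_core KB of case (a). -/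
def Ka : KB := Ta ∪ Aa

/-- T' = {Wife ⊑ ∃HasHusband, ∃HasHusband ⊑ Wife, Priest ⊑ ¬∃HasHusband⁻,
P0 ⊑ Priest, P1 ⊑ Priest, P2 ⊑ Priest}. -/
def Tb : Finset Assertion :=
  { .conceptIncl (.atom Wife) (.ex (.pos HasHusband)),
    .conceptIncl (.ex (.pos HasHusband)) (.atom Wife),
    .conceptDisj (.atom Priest) (.ex (.inv HasHusband)),
    .conceptIncl (.atom P0) (.atom Priest),
    .conceptIncl (.atom P1) (.atom Priest),
    .conceptIncl (.atom P2) (.atom Priest) }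

/-- A' = {HasHusband(mary, john), Priest(adam), P1(adam), Priest(bob), P2(bob)}. -/
def Ab : Finset Assertion :=
  { .memberR HasHusband mary john,
    .memberC Priest adam,
    .memberC P1 adam,
    .memberC Priest bob,
    .memberC P2 bob }

/-- The DL-Lite_core KB of case (b). -/
def Kb : KB := Tb ∪ Ab

/-- The DL-Lite_F KB of case (c): case (a) plus funct(HasHusband). -/
def Kc : KB := Ka ∪ { .funct (.pos HasHusband) }

end DLLite

namespace DLLite

/-- N = {HasHusband(mary, john)}, the single ABox assertion to contract. -/
def Ncb : KB := { .memberR HasHusband mary john }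

/-!
Models of a DL-Lite_FR KB are closed under adding a disjoint isomorphic copy: `I ∪ I^f` satisfies
every TBox assertion that `I` does (they are preserved by isomorphisms and by disjoint unions) and
every membership assertion that `I` does. The contraction is not. Erasing `HasHusband(mary, john)`
from the intended model `I₀` gives an interpretation `J₀` of the contraction, one atom (one symbol)
away from `I₀`. In `J₀ ∪ J₀^f` the copy of `mary` is a wife without a husband and the copy of
`adam` is `john`, now a priest. So every model `I` of the KB differs from `J₀ ∪ J₀^f` on
`HasHusband(mary, john)` and on one more atom (in case (b): on `HasHusband` and on `Priest`),
whereas erasing `HasHusband(mary, john)` from `I` itself costs only that atom (that symbol).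
-/

variable {I J : Interp} {f : Δ → Δ}

namespace BasicRole

theorem interp_union (R : BasicRole) : R.interp (I.union J) = R.interp I ∪ R.interp J := by
  cases R <;> rfl

theorem interp_image (R : BasicRole) : R.interp (I.image f) = Prod.map f f '' R.interp I := by
  cases R with
  | pos P => rfl
  | inv P =>
    ext ⟨o, o'⟩
    simp only [interp, Interp.image, Set.mem_ofPred_eq, Set.mem_image, Prod.exists, Prod.map,
      Prod.mk.injEq]
    constructor <;> rintro ⟨x, y, hxy, rfl, rfl⟩ <;> exact ⟨y, x, hxy, rfl, rfl⟩

theorem fst_mem_support {R : BasicRole} {o o' : Δ} (h : (o, o') ∈ R.interp I) :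
    o ∈ I.support := by
  cases R with
  | pos P => exact Or.inr (Set.mem_iUnion.2 ⟨P, o', Or.inl h⟩)
  | inv P => exact Or.inr (Set.mem_iUnion.2 ⟨P, o', Or.inr h⟩)

end BasicRole

namespace BasicConcept

theorem interp_union (B : BasicConcept) : B.interp (I.union J) = B.interp I ∪ B.interp J := by
  cases B with
  | atom A => rfl
  | ex R => ext o; simp [interp, R.interp_union, exists_or]

theorem interp_image (B : BasicConcept) : B.interp (I.image f) = f '' B.interp I := by
  cases B with
  | atom A => rfl
  | ex R =>
    ext o
    simp only [interp, R.interp_image, Set.mem_ofPred_eq, Set.mem_image, Prod.exists, Prod.map,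
      Prod.mk.injEq]
    constructor
    · rintro ⟨_, x, y, hxy, rfl, rfl⟩
      exact ⟨x, ⟨y, hxy⟩, rfl⟩
    · rintro ⟨x, ⟨y, hxy⟩, rfl⟩
      exact ⟨f y, x, y, hxy, rfl, rfl⟩

theorem interp_subset_support (B : BasicConcept) : B.interp I ⊆ I.support := by
  cases B with
  | atom A => exact fun o h => Or.inl (Set.mem_iUnion.2 ⟨A, h⟩)
  | ex R => exact fun o ⟨o', h⟩ => R.fst_mem_support h

end BasicConcept

namespace Interp

theorem support_subset {S : Set Δ} (hc : ∀ A, I.concept A ⊆ S) (hr : ∀ P, I.role P = ∅) :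
    I.support ⊆ S := by
  rintro o (ho | ⟨_, ⟨P, rfl⟩, o', ho | ho⟩)
  · obtain ⟨_, ⟨A, rfl⟩, ho⟩ := ho
    exact hc A ho
  all_goals simp [hr P] at ho

theorem sat_union {a : Assertion} (hI : I.sat a) (hJ : a.isTBox → J.sat a)
    (hd : Disjoint I.support J.support) : (I.union J).sat a := by
  cases a with
  | conceptIncl B1 B2 =>
    simp only [sat, BasicConcept.interp_union] at hI hJ ⊢
    exact Set.union_subset_union hI (hJ trivial)
  | conceptDisj B1 B2 =>
    simp only [sat, BasicConcept.interp_union, ← Set.disjoint_iff_inter_eq_empty] at hI hJ ⊢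
    refine Set.disjoint_union_left.2 ⟨Set.disjoint_union_right.2 ⟨hI, ?_⟩,
      Set.disjoint_union_right.2 ⟨?_, hJ trivial⟩⟩
    · exact hd.mono B1.interp_subset_support B2.interp_subset_support
    · exact hd.symm.mono B1.interp_subset_support B2.interp_subset_support
  | roleIncl R1 R2 =>
    simp only [sat, BasicRole.interp_union] at hI hJ ⊢
    exact Set.union_subset_union hI (hJ trivial)
  | roleDisj R1 R2 =>
    simp only [sat, BasicRole.interp_union, Set.eq_empty_iff_forall_notMem] at hI hJ ⊢
    rintro ⟨o, o'⟩ ⟨h1 | h1, h2 | h2⟩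
    · exact hI _ ⟨h1, h2⟩
    · exact hd.notMem_of_mem_left (BasicRole.fst_mem_support h1) (BasicRole.fst_mem_support h2)
    · exact hd.notMem_of_mem_left (BasicRole.fst_mem_support h2) (BasicRole.fst_mem_support h1)
    · exact hJ trivial _ ⟨h1, h2⟩
  | funct R =>
    simp only [sat, BasicRole.interp_union] at hI hJ ⊢
    rintro o o1 o2 (h1 | h1) (h2 | h2)
    · exact hI o o1 o2 h1 h2
    · exact (hd.notMem_of_mem_left (BasicRole.fst_mem_support h1)
        (BasicRole.fst_mem_support h2)).elim
    · exact (hd.notMem_of_mem_left (BasicRole.fst_mem_support h2)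
        (BasicRole.fst_mem_support h1)).elim
    · exact hJ trivial o o1 o2 h1 h2
  | memberC A c => exact Or.inl hI
  | memberR P c d => exact Or.inl hI

theorem sat_image (hf : f.Injective) {a : Assertion} (hI : I.sat a) (ha : a.isTBox) :
    (I.image f).sat a := by
  cases a with
  | conceptIncl B1 B2 =>
    simp only [sat, BasicConcept.interp_image] at hI ⊢
    exact Set.image_mono hI
  | conceptDisj B1 B2 =>
    simp only [sat, BasicConcept.interp_image] at hI ⊢
    rw [← Set.image_inter hf, hI, Set.image_empty]
  | roleIncl R1 R2 =>
    simp only [sat, BasicRole.interp_image] at hI ⊢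
    exact Set.image_mono hI
  | roleDisj R1 R2 =>
    simp only [sat, BasicRole.interp_image] at hI ⊢
    rw [← Set.image_inter (hf.prodMap hf), hI, Set.image_empty]
  | funct R =>
    simp only [sat, BasicRole.interp_image] at hI ⊢
    rintro _ _ _ ⟨⟨x, y₁⟩, h1, he1⟩ ⟨⟨x', y₂⟩, h2, he2⟩
    simp only [Prod.map, Prod.mk.injEq] at he1 he2
    obtain ⟨rfl, rfl⟩ := he1
    obtain ⟨hx, rfl⟩ := he2
    obtain rfl := hf hx
    rw [hI _ _ _ h1 h2]
  | memberC A c => exact ha.elim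
  | memberR P c d => exact ha.elim

def withCopy (I : Interp) (f : Δ → Δ) : Interp := I.union (I.image f)

theorem sat_withCopy (hf : f.Injective) (hd : Disjoint I.support (I.image f).support)
    {a : Assertion} (hI : I.sat a) : (I.withCopy f).sat a :=
  sat_union hI (sat_image hf hI) hd

end Interp

theorem withCopy_mem_mod {K : KB} (hI : I ∈ Mod K) (hf : f.Injective)
    (hd : Disjoint I.support (I.image f).support) : I.withCopy f ∈ Mod K :=
  fun a ha => Interp.sat_withCopy hf hd (hI a ha)

theorem not_exists_eq_mod_of_withCopy_notMem {C : Set Interp} (hJ : J ∈ C)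
    (hU : J.withCopy f ∉ C) (hf : f.Injective) (hd : Disjoint J.support (J.image f).support) :
    ¬ ∃ K, C = Mod K := by
  rintro ⟨K, rfl⟩
  exact hU (withCopy_mem_mod hJ hf hd)

theorem mod_anti {K K' : KB} (h : K ⊆ K') : Mod K' ⊆ Mod K :=
  fun _ hI a ha => hI a (h ha)

theorem mem_role_of_mem_mod {K : KB} {P : RoleName} {a b : Δ} (hI : I ∈ Mod K)
    (h : .memberR P a b ∈ K) : (a, b) ∈ I.role P :=
  hI _ h

theorem mem_nonMod_singleton {a : Assertion} : I ∈ NonMod {a} ↔ ¬ I.sat a := by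
  simp [NonMod]

@[simp] theorem Interp.mem_atoms_c {A : ConceptName} {o : Δ} :
    Atom.c A o ∈ I.atoms ↔ o ∈ I.concept A := Iff.rfl

@[simp] theorem Interp.mem_atoms_r {P : RoleName} {o o' : Δ} :
    Atom.r P o o' ∈ I.atoms ↔ (o, o') ∈ I.role P := Iff.rfl

@[simp] theorem mem_distSSub_c {A : ConceptName} :
    SName.c A ∈ distSSub I J ↔ I.concept A ≠ J.concept A := Iff.rfl

@[simp] theorem mem_distSSub_r {P : RoleName} :
    SName.r P ∈ distSSub I J ↔ I.role P ≠ J.role P := Iff.rfl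

section SetLemmas

variable {α : Type} {s : Set α} {x y : α}

theorem not_ssubset_singleton_of_mem (hx : x ∈ s) : ¬ s ⊂ {x} :=
  fun h => (Set.ssubset_singleton_iff.1 h ▸ hx : x ∈ (∅ : Set α))

theorem not_encard_lt_one_of_mem (hx : x ∈ s) : ¬ s.encard < 1 :=
  fun h => (Set.encard_lt_one.1 h ▸ hx : x ∈ (∅ : Set α))

theorem singleton_ssubset_of_mem_of_ne (hx : x ∈ s) (hy : y ∈ s) (hne : y ≠ x) : {x} ⊂ s :=
  (Set.ssubset_iff_of_subset (Set.singleton_subset_iff.2 hx)).2 ⟨y, hy, hne⟩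

theorem one_lt_encard_of_mem_of_ne (hx : x ∈ s) (hy : y ∈ s) (hne : y ≠ x) : 1 < s.encard :=
  Set.one_lt_encard_iff.2 ⟨x, y, hx, hy, hne.symm⟩

end SetLemmas

theorem distACard_eq_encard : distACard I J = (distASub I J).encard := rfl

def Interp.eraseRole (I : Interp) (P : RoleName) (p : Δ × Δ) : Interp :=
  ⟨I.concept, Function.update I.role P (I.role P \ {p})⟩

section Erase

variable {P : RoleName} {a b : Δ} {U : Interp}

theorem eraseRole_mem_nonMod (I : Interp) (P : RoleName) (a b : Δ) :
    I.eraseRole P (a, b) ∈ NonMod {.memberR P a b} :=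
  mem_nonMod_singleton.2 fun h => by simp [Interp.sat, Interp.eraseRole] at h

theorem distASub_eraseRole (h : (a, b) ∈ I.role P) :
    distASub I (I.eraseRole P (a, b)) = {Atom.r P a b} := by
  ext (⟨A, o⟩ | ⟨Q, o, o'⟩)
  · simp [distASub, Set.mem_symmDiff, Interp.eraseRole]
  · by_cases hQ : Q = P
    · subst hQ
      by_cases hp : o = a ∧ o' = b <;> simp_all [distASub, Set.mem_symmDiff, Interp.eraseRole]
    · simp [distASub, Set.mem_symmDiff, Interp.eraseRole, hQ]

theorem distSSub_eraseRole (h : (a, b) ∈ I.role P) :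
    distSSub I (I.eraseRole P (a, b)) = {SName.r P} := by
  ext (A | Q)
  · simp [Interp.eraseRole]
  · by_cases hQ : Q = P
    · subst hQ
      simp only [mem_distSSub_r, Interp.eraseRole, Function.update_self, Set.mem_singleton_iff,
        iff_true]
      intro he
      exact (he ▸ h : (a, b) ∈ I.role Q \ {(a, b)}).2 rfl
    · simp [Interp.eraseRole, hQ]

theorem atom_mem_distASub (hI : (a, b) ∈ I.role P) (hJ : (a, b) ∉ J.role P) :
    Atom.r P a b ∈ distASub I J :=
  Set.mem_symmDiff.2 (Or.inl ⟨hI, hJ⟩)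

theorem role_mem_distSSub (hI : (a, b) ∈ I.role P) (hJ : (a, b) ∉ J.role P) :
    SName.r P ∈ distSSub I J :=
  fun he => hJ (he ▸ hI)

theorem not_distASub_lt_eraseRole (hI : (a, b) ∈ I.role P) (hJ : (a, b) ∉ J.role P) :
    ¬ distASub I J < distASub I (I.eraseRole P (a, b)) := by
  rw [distASub_eraseRole hI]
  exact not_ssubset_singleton_of_mem (atom_mem_distASub hI hJ)

theorem not_distACard_lt_eraseRole (hI : (a, b) ∈ I.role P) (hJ : (a, b) ∉ J.role P) :
    ¬ distACard I J < distACard I (I.eraseRole P (a, b)) := by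
  rw [distACard_eq_encard, distACard_eq_encard, distASub_eraseRole hI, Set.encard_singleton]
  exact not_encard_lt_one_of_mem (atom_mem_distASub hI hJ)

theorem not_distSSub_lt_eraseRole (hI : (a, b) ∈ I.role P) (hJ : (a, b) ∉ J.role P) :
    ¬ distSSub I J < distSSub I (I.eraseRole P (a, b)) := by
  rw [distSSub_eraseRole hI]
  exact not_ssubset_singleton_of_mem (role_mem_distSSub hI hJ)

theorem not_distSCard_lt_eraseRole (hI : (a, b) ∈ I.role P) (hJ : (a, b) ∉ J.role P) :
    ¬ distSCard I J < distSCard I (I.eraseRole P (a, b)) := by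
  rw [distSCard, distSCard, distSSub_eraseRole hI, Set.encard_singleton]
  exact not_encard_lt_one_of_mem (role_mem_distSSub hI hJ)

theorem exists_mem_distASub_ne {A : ConceptName} {o : Δ}
    (hW : I.sat (.conceptIncl (.atom A) (.ex (.pos P)))) (hU : U.role P = ∅)
    (ho : o ∈ U.concept A) (hoa : o ≠ a) : ∃ β ∈ distASub I U, β ≠ Atom.r P a b := by
  by_cases hoI : o ∈ I.concept A
  · obtain ⟨o', ho'⟩ := hW hoI
    refine ⟨Atom.r P o o', atom_mem_distASub ho' (by simp [hU]), ?_⟩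
    simp [hoa]
  · exact ⟨Atom.c A o, Set.mem_symmDiff.2 (Or.inr ⟨ho, hoI⟩), by simp⟩

theorem concept_mem_distSSub_of_conceptDisj {A : ConceptName}
    (hD : I.sat (.conceptDisj (.atom A) (.ex (.inv P)))) (hab : (a, b) ∈ I.role P)
    (hb : b ∈ U.concept A) : SName.c A ∈ distSSub I U := fun he =>
  (Set.eq_empty_iff_forall_notMem.1 hD) b ⟨(he ▸ hb : b ∈ I.concept A), a, hab⟩

theorem distASub_eraseRole_lt {A : ConceptName} {o : Δ}
    (hW : I.sat (.conceptIncl (.atom A) (.ex (.pos P)))) (hab : (a, b) ∈ I.role P)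
    (hU : U.role P = ∅) (ho : o ∈ U.concept A) (hoa : o ≠ a) :
    distASub I (I.eraseRole P (a, b)) < distASub I U := by
  obtain ⟨β, hβ, hne⟩ := exists_mem_distASub_ne (b := b) hW hU ho hoa
  rw [distASub_eraseRole hab]
  exact singleton_ssubset_of_mem_of_ne (atom_mem_distASub hab (by simp [hU])) hβ hne

theorem distACard_eraseRole_lt {A : ConceptName} {o : Δ}
    (hW : I.sat (.conceptIncl (.atom A) (.ex (.pos P)))) (hab : (a, b) ∈ I.role P)
    (hU : U.role P = ∅) (ho : o ∈ U.concept A) (hoa : o ≠ a) :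
    distACard I (I.eraseRole P (a, b)) < distACard I U := by
  obtain ⟨β, hβ, hne⟩ := exists_mem_distASub_ne (b := b) hW hU ho hoa
  rw [distACard_eq_encard, distACard_eq_encard, distASub_eraseRole hab, Set.encard_singleton]
  exact one_lt_encard_of_mem_of_ne (atom_mem_distASub hab (by simp [hU])) hβ hne

theorem distSSub_eraseRole_lt {A : ConceptName}
    (hD : I.sat (.conceptDisj (.atom A) (.ex (.inv P)))) (hab : (a, b) ∈ I.role P)
    (hU : (a, b) ∉ U.role P) (hb : b ∈ U.concept A) :
    distSSub I (I.eraseRole P (a, b)) < distSSub I U := by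
  rw [distSSub_eraseRole hab]
  exact singleton_ssubset_of_mem_of_ne (role_mem_distSSub hab hU)
    (concept_mem_distSSub_of_conceptDisj hD hab hb) (by simp)

theorem distSCard_eraseRole_lt {A : ConceptName}
    (hD : I.sat (.conceptDisj (.atom A) (.ex (.inv P)))) (hab : (a, b) ∈ I.role P)
    (hU : (a, b) ∉ U.role P) (hb : b ∈ U.concept A) :
    distSCard I (I.eraseRole P (a, b)) < distSCard I U := by
  rw [distSCard, distSCard, distSSub_eraseRole hab, Set.encard_singleton]
  exact one_lt_encard_of_mem_of_ne (role_mem_distSSub hab hU)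
    (concept_mem_distSSub_of_conceptDisj hD hab hb) (by simp)

end Erase

section Contraction

variable {D : Type} [PartialOrder D] (dist : Interp → Interp → D) {K : KB} {P : RoleName}
  {a b : Δ}

theorem not_exists_eq_mod_of_loc_eraseRole (hK : .memberR P a b ∈ K)
    (hmin : ∀ I J : Interp, (a, b) ∈ I.role P → (a, b) ∉ J.role P →
      ¬ dist I J < dist I (I.eraseRole P (a, b)))
    {I₀ : Interp} (hI₀ : I₀ ∈ Mod K) (hf : f.Injective)
    (hd : Disjoint (I₀.eraseRole P (a, b)).support ((I₀.eraseRole P (a, b)).image f).support)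
    (hU : (a, b) ∉ ((I₀.eraseRole P (a, b)).withCopy f).role P)
    (hlt : ∀ I ∈ Mod K, dist I (I.eraseRole P (a, b)) <
      dist I ((I₀.eraseRole P (a, b)).withCopy f)) :
    ¬ ∃ K', Mod K ∪ expLocD dist (Mod K) (NonMod {.memberR P a b}) = Mod K' := by
  refine not_exists_eq_mod_of_withCopy_notMem (Or.inr ⟨eraseRole_mem_nonMod I₀ P a b, I₀, hI₀,
    fun J hJ => hmin _ _ (mem_role_of_mem_mod hI₀ hK) (mem_nonMod_singleton.1 hJ)⟩) ?_ hf hd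
  rintro (hUK | ⟨-, I, hI, hUmin⟩)
  · exact hU (mem_role_of_mem_mod hUK hK)
  · exact hUmin _ (eraseRole_mem_nonMod I P a b) (hlt I hI)

variable {N : KB}

theorem not_exists_eq_mod_of_glob {I₀ J₀ : Interp} (hI₀ : I₀ ∈ Mod K) (hJ₀ : J₀ ∈ NonMod N)
    (hmin : ∀ I ∈ Mod K, ∀ J ∈ NonMod N, ¬ dist I J < dist I₀ J₀)
    (hf : f.Injective) (hd : Disjoint J₀.support (J₀.image f).support)
    (hUK : J₀.withCopy f ∉ Mod K) (hlt : ∀ I ∈ Mod K, dist I₀ J₀ < dist I (J₀.withCopy f)) :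
    ¬ ∃ K', Mod K ∪ expGlobD dist (Mod K) (NonMod N) = Mod K' := by
  refine not_exists_eq_mod_of_withCopy_notMem (Or.inr ⟨hJ₀, I₀, hI₀, hmin⟩) ?_ hf hd
  rintro (hU | ⟨-, I, hI, hUmin⟩)
  · exact hUK hU
  · exact hUmin I₀ hI₀ J₀ hJ₀ (hlt I hI)

end Contraction

def baseModel : Interp where
  concept A := {o | (A = EmpWife ∨ A = Wife) ∧ o = mary ∨ (A = Priest ∨ A = P1) ∧ o = adam ∨
    (A = Priest ∨ A = P2) ∧ o = bob}
  role P := {p | P = HasHusband ∧ p = (mary, john)}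

theorem baseModel_mem_mod_Kc : baseModel ∈ Mod Kc := by
  intro a ha
  simp only [Kc, Ka, Ta, Aa, Finset.mem_union, Finset.mem_insert, Finset.mem_singleton] at ha
  rcases ha with ((rfl | rfl | rfl | rfl) | (rfl | rfl | rfl | rfl)) | rfl <;>
    simp [Interp.sat, BasicConcept.interp, BasicRole.interp, baseModel, EmpWife, Wife, Priest,
      P1, P2, HasHusband, mary, john, adam, bob]
  rintro _ _ _ - rfl - rfl
  rfl

theorem baseModel_mem_mod_Kb : baseModel ∈ Mod Kb := by
  intro a ha
  simp only [Kb, Tb, Ab, Finset.mem_union, Finset.mem_insert, Finset.mem_singleton] at ha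
  rcases ha with (rfl | rfl | rfl | rfl | rfl | rfl) | (rfl | rfl | rfl | rfl | rfl) <;>
    simp [Interp.sat, BasicConcept.interp, BasicRole.interp, baseModel, EmpWife, Wife, Priest,
      P0, P1, P2, HasHusband, mary, john, adam, bob, Set.subset_def]

def erasedModel : Interp := baseModel.eraseRole HasHusband (mary, john)

theorem erasedModel_role (P : RoleName) : erasedModel.role P = ∅ := by
  by_cases hP : P = HasHusband
  · subst hP
    simp [erasedModel, Interp.eraseRole, baseModel]
  · simp [erasedModel, Interp.eraseRole, baseModel, hP]

def copyMap (x : Δ) : Δ := if x = adam then john else x + 4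

theorem copyMap_injective : copyMap.Injective := by
  intro x y h
  simp only [copyMap, adam, john] at h
  split_ifs at h <;> grind

theorem disjoint_support_erasedModel :
    Disjoint erasedModel.support (erasedModel.image copyMap).support := by
  have hS : ∀ A, erasedModel.concept A ⊆ {mary, adam, bob} := by
    intro A o ho
    simp only [erasedModel, Interp.eraseRole, baseModel, Set.mem_ofPred_eq] at ho
    simp only [Set.mem_insert_iff, Set.mem_singleton_iff]
    tauto
  refine Disjoint.mono (Interp.support_subset hS erasedModel_role)
    (Interp.support_subset (fun A => Set.image_mono (hS A)) fun P => ?_) ?_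
  · simp [Interp.image, erasedModel_role]
  · simp [Set.image_insert_eq, copyMap, mary, adam, bob, john]

def doubledModel : Interp := erasedModel.withCopy copyMap

theorem doubledModel_role (P : RoleName) : doubledModel.role P = ∅ := by
  simp [doubledModel, Interp.withCopy, Interp.union, Interp.image, erasedModel_role]

theorem copyMap_mary_mem_doubledModel_wife : copyMap mary ∈ doubledModel.concept Wife :=
  Or.inr ⟨mary, by simp [erasedModel, Interp.eraseRole, baseModel], rfl⟩

theorem john_mem_doubledModel_priest : john ∈ doubledModel.concept Priest :=
  Or.inr ⟨adam, by simp [erasedModel, Interp.eraseRole, baseModel], rfl⟩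

theorem not_exists_eq_mod_contractKB_loc_atoms (z : OrdKind) :
    ¬ ∃ K', contractKB .loc .atoms z Ka Ncb = Mod K' := by
  have hbase : baseModel ∈ Mod Ka := mod_anti Finset.subset_union_left baseModel_mem_mod_Kc
  have hU : (mary, john) ∉ doubledModel.role HasHusband := by simp [doubledModel_role]
  cases z
  · exact not_exists_eq_mod_of_loc_eraseRole distASub (by decide)
      (fun _ _ => not_distASub_lt_eraseRole) hbase copyMap_injective disjoint_support_erasedModel
      hU fun I hI => distASub_eraseRole_lt (hI _ (by decide)) (mem_role_of_mem_mod hI (by decide))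
        (doubledModel_role _) copyMap_mary_mem_doubledModel_wife (by decide)
  · exact not_exists_eq_mod_of_loc_eraseRole distACard (by decide)
      (fun _ _ => not_distACard_lt_eraseRole) hbase copyMap_injective disjoint_support_erasedModel
      hU fun I hI => distACard_eraseRole_lt (hI _ (by decide)) (mem_role_of_mem_mod hI (by decide))
        (doubledModel_role _) copyMap_mary_mem_doubledModel_wife (by decide)

theorem not_exists_eq_mod_contractKB_loc_symbols (z : OrdKind) :
    ¬ ∃ K', contractKB .loc .symbols z Kb Ncb = Mod K' := by
  have hU : (mary, john) ∉ doubledModel.role HasHusband := by simp [doubledModel_role]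
  cases z
  · exact not_exists_eq_mod_of_loc_eraseRole distSSub (by decide)
      (fun _ _ => not_distSSub_lt_eraseRole) baseModel_mem_mod_Kb copyMap_injective
      disjoint_support_erasedModel hU fun I hI => distSSub_eraseRole_lt (hI _ (by decide))
        (mem_role_of_mem_mod hI (by decide)) hU john_mem_doubledModel_priest
  · exact not_exists_eq_mod_of_loc_eraseRole distSCard (by decide)
      (fun _ _ => not_distSCard_lt_eraseRole) baseModel_mem_mod_Kb copyMap_injective
      disjoint_support_erasedModel hU fun I hI => distSCard_eraseRole_lt (hI _ (by decide))
        (mem_role_of_mem_mod hI (by decide)) hU john_mem_doubledModel_priest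

theorem not_exists_eq_mod_contractKB_glob_atoms_subset :
    ¬ ∃ K', contractKB .glob .atoms .subset Kc Ncb = Mod K' := by
  have hHH {I : Interp} (hI : I ∈ Mod Kc) : (mary, john) ∈ I.role HasHusband :=
    mem_role_of_mem_mod hI (by decide)
  have hdist : distASub baseModel erasedModel = {Atom.r HasHusband mary john} :=
    distASub_eraseRole (hHH baseModel_mem_mod_Kc)
  refine not_exists_eq_mod_of_glob distASub (J₀ := erasedModel) baseModel_mem_mod_Kc
    (eraseRole_mem_nonMod baseModel HasHusband mary john) (fun I hI J hJ => ?_) copyMap_injective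
    disjoint_support_erasedModel
    (fun hU => by simpa [doubledModel_role] using hHH (I := doubledModel) hU) fun I hI => ?_
  · rw [hdist]
    exact not_ssubset_singleton_of_mem (atom_mem_distASub (hHH hI) (mem_nonMod_singleton.1 hJ))
  · rw [hdist, ← distASub_eraseRole (hHH hI)]
    exact distASub_eraseRole_lt (hI _ (by decide)) (hHH hI) (doubledModel_role _)
      copyMap_mary_mem_doubledModel_wife (by decide)

/-- DL-Lite_FR is not closed under ABox contraction for `glob^atoms_⊆` and for
the four local semantics `loc^y_z`:
(a) for the DL-Lite_core KB `Ka` under `loc^atoms_z`,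
(b) for the DL-Lite_core KB `Kb` under `loc^symbols_z`, and
(c) for the DL-Lite_F KB `Kc` under `glob^atoms_⊆`,
the contraction of the single ABox assertion HasHusband(mary, john) is not the
set of models of any DL-Lite_FR KB. -/
theorem abox_contraction_inexpressible :
    (∀ z : OrdKind, ¬ ∃ K' : KB, contractKB .loc .atoms z Ka Ncb = Mod K') ∧
    (∀ z : OrdKind, ¬ ∃ K' : KB, contractKB .loc .symbols z Kb Ncb = Mod K') ∧
    (¬ ∃ K' : KB, contractKB .glob .atoms .subset Kc Ncb = Mod K') :=
  ⟨not_exists_eq_mod_contractKB_loc_atoms, not_exists_eq_mod_contractKB_loc_symbols,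
    not_exists_eq_mod_contractKB_glob_atoms_subset⟩

end DLLite
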